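/- With R_k, S_k defined by R_1 = 4d - c^2, S_1 = d, R_{k+1} = R_k^2 + cR_kS_k + dS_k^2, S_{k+1} = R_k^2: for all k ≥ 1, the minimal total degree among the monomials of R_k equals 2^{k-1}, and this minimum is achieved by a unique monomial, which is a power of d. -/

import Mathlib

open MvPolynomial

/-- The pair `(R_{m+1}, S_{m+1})` of polynomials in `c = X 0` and `d = X 1`:
`R_1 = 4d - c²`, `S_1 = d`, `R_{m+1} = R_m² + c·R_m·S_m + d·S_m²`, `S_{m+1} = R_m²`. -/
noncomputable def RS : ℕ → MvPolynomial (Fin 2) ℤ × MvPolynomial (Fin 2) ℤ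
  | 0 => (4 * X 1 - (X 0) ^ 2, X 1)
  | (m + 1) =>
      ((RS m).1 ^ 2 + X 0 * (RS m).1 * (RS m).2 + X 1 * (RS m).2 ^ 2, (RS m).1 ^ 2)

/-- `R_m` for `m ≥ 1`. -/
noncomputable def Rpoly (m : ℕ) : MvPolynomial (Fin 2) ℤ := (RS (m - 1)).1

/-- `S_m` for `m ≥ 1`. -/
noncomputable def Spoly (m : ℕ) : MvPolynomial (Fin 2) ℤ := (RS (m - 1)).2
/-!
If every monomial of `R` and `S` has total degree at least `n`, then in `R² + c·R·S + d·S²`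
the terms `c·R·S` and `d·S²` only contribute in degree `≥ 2n + 1`, so the degree-`2n` part of
`R_{k+1}` is the square of the degree-`n` part of `R_k`. Starting from the
degree-one part `4d` of `R_1`, the lowest part of `R_k` is therefore `(4d)^(2^(k-1))`.
-/

namespace MvPolynomial

variable {σ R : Type*} [CommSemiring R] {p q : MvPolynomial σ R} {a b n : ℕ}

theorem coeff_eq_zero_of_degree_lt (hp : ∀ m ∈ p.support, n ≤ m.degree) {m : σ →₀ ℕ}
    (hm : m.degree < n) : coeff m p = 0 :=
  notMem_support_iff.1 fun h => (hp m h).not_gt hm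

theorem le_degree_of_mem_support_add (hp : ∀ m ∈ p.support, n ≤ m.degree)
    (hq : ∀ m ∈ q.support, n ≤ m.degree) : ∀ m ∈ (p + q).support, n ≤ m.degree := by
  classical
  intro m hm
  rcases Finset.mem_union.1 (support_add hm) with h | h
  exacts [hp m h, hq m h]

theorem le_degree_of_mem_support_sub {R : Type*} [CommRing R] {p q : MvPolynomial σ R}
    (hp : ∀ m ∈ p.support, n ≤ m.degree) (hq : ∀ m ∈ q.support, n ≤ m.degree) :
    ∀ m ∈ (p - q).support, n ≤ m.degree := by
  classical
  intro m hm
  rcases Finset.mem_union.1 (support_sub σ p q hm) with h | h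
  exacts [hp m h, hq m h]

theorem le_degree_of_mem_support_mul (hp : ∀ m ∈ p.support, a ≤ m.degree)
    (hq : ∀ m ∈ q.support, b ≤ m.degree) : ∀ m ∈ (p * q).support, a + b ≤ m.degree := by
  classical
  intro m hm
  obtain ⟨x, hx, y, hy, rfl⟩ := Finset.mem_add.1 (support_mul p q hm)
  rw [map_add]
  exact add_le_add (hp x hx) (hq y hy)

theorem le_degree_of_mem_support_pow (hp : ∀ m ∈ p.support, a ≤ m.degree) :
    ∀ k : ℕ, ∀ m ∈ (p ^ k).support, k * a ≤ m.degree
  | 0, _, _ => by simp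
  | k + 1, m, hm => by
    rw [pow_succ] at hm
    simpa [add_mul] using le_degree_of_mem_support_mul (le_degree_of_mem_support_pow hp k) hp m hm

theorem le_degree_of_mem_support_X (i : σ) :
    ∀ m ∈ (X i : MvPolynomial σ R).support, 1 ≤ m.degree := by
  intro m hm
  rw [Finset.mem_singleton.1 (support_monomial_subset hm), Finsupp.degree_single]

theorem homogeneousComponent_mul_of_le_degree (hp : ∀ m ∈ p.support, a ≤ m.degree)
    (hq : ∀ m ∈ q.support, b ≤ m.degree) :
    homogeneousComponent (a + b) (p * q) = homogeneousComponent a p * homogeneousComponent b q := by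
  classical
  ext d
  rw [coeff_homogeneousComponent]
  split_ifs with hd
  · rw [coeff_mul, coeff_mul]
    refine Finset.sum_congr rfl fun ⟨x, y⟩ hxy => ?_
    rw [Finset.HasAntidiagonal.mem_antidiagonal] at hxy
    rw [← hxy, map_add] at hd
    simp only [coeff_homogeneousComponent]
    rcases trichotomy_of_add_eq_add hd with h | h | h
    · rw [if_pos h.1, if_pos h.2]
    · rw [if_neg h.ne, zero_mul, coeff_eq_zero_of_degree_lt hp h, zero_mul]
    · rw [if_neg h.ne, mul_zero, coeff_eq_zero_of_degree_lt hq h, mul_zero]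
  · exact (((homogeneousComponent_isHomogeneous a p).mul
      (homogeneousComponent_isHomogeneous b q)).coeff_eq_zero hd).symm

theorem mem_support_and_degree_eq_iff_of_homogeneousComponent_eq_monomial {s : σ →₀ ℕ} {r : R}
    (h : homogeneousComponent n p = monomial s r) (hr : r ≠ 0) {m : σ →₀ ℕ} :
    m ∈ p.support ∧ m.degree = n ↔ m = s := by
  classical
  have hsupp := support_homogeneousComponent n p
  rw [h, support_monomial, if_neg hr] at hsupp
  rw [← Finset.mem_singleton (a := s) (b := m), hsupp, Finset.mem_filter]

section Recursion

variable {f g : MvPolynomial σ R} (i j : σ)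

theorem le_degree_of_mem_support_cross_terms (hf : ∀ m ∈ f.support, n ≤ m.degree)
    (hg : ∀ m ∈ g.support, n ≤ m.degree) :
    ∀ m ∈ (X i * f * g + X j * g ^ 2).support, 2 * n + 1 ≤ m.degree := by
  refine le_degree_of_mem_support_add (fun m hm => ?_) (fun m hm => ?_)
  · have := le_degree_of_mem_support_mul
      (le_degree_of_mem_support_mul (le_degree_of_mem_support_X i) hf) hg m hm
    omega
  · have := le_degree_of_mem_support_mul (le_degree_of_mem_support_X j)
      (le_degree_of_mem_support_pow hg 2) m hm
    omega

theorem le_degree_of_mem_support_recursion (hf : ∀ m ∈ f.support, n ≤ m.degree)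
    (hg : ∀ m ∈ g.support, n ≤ m.degree) :
    ∀ m ∈ (f ^ 2 + X i * f * g + X j * g ^ 2).support, 2 * n ≤ m.degree := by
  rw [add_assoc]
  exact le_degree_of_mem_support_add (le_degree_of_mem_support_pow hf 2)
    fun m hm => by have := le_degree_of_mem_support_cross_terms i j hf hg m hm; omega

theorem homogeneousComponent_recursion (hf : ∀ m ∈ f.support, n ≤ m.degree)
    (hg : ∀ m ∈ g.support, n ≤ m.degree) :
    homogeneousComponent (2 * n) (f ^ 2 + X i * f * g + X j * g ^ 2) =
      homogeneousComponent n f ^ 2 := by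
  have hcross : homogeneousComponent (2 * n) (X i * f * g + X j * g ^ 2) = 0 :=
    homogeneousComponent_eq_zero' _ _ fun m hm => by
      have := le_degree_of_mem_support_cross_terms i j hf hg m hm; omega
  rw [add_assoc, map_add, hcross, add_zero, two_mul, sq, sq,
    homogeneousComponent_mul_of_le_degree hf hf]

end Recursion

end MvPolynomial

open MvPolynomial

theorem le_degree_of_mem_support_RS (j : ℕ) :
    (∀ m ∈ (RS j).1.support, 2 ^ j ≤ m.degree) ∧ ∀ m ∈ (RS j).2.support, 2 ^ j ≤ m.degree := by
  induction j with
  | zero =>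
    refine ⟨le_degree_of_mem_support_sub (fun m hm => ?_) (fun m hm => ?_),
      le_degree_of_mem_support_X 1⟩
    · simpa using le_degree_of_mem_support_mul (fun _ _ => Nat.zero_le _)
        (le_degree_of_mem_support_X 1) m hm
    · have := le_degree_of_mem_support_pow (le_degree_of_mem_support_X 0) 2 m hm
      omega
  | succ j ih =>
    rw [pow_succ']
    exact ⟨le_degree_of_mem_support_recursion 0 1 ih.1 ih.2, le_degree_of_mem_support_pow ih.1 2⟩

theorem homogeneousComponent_RS_fst (j : ℕ) :
    homogeneousComponent (2 ^ j) (RS j).1 = monomial (Finsupp.single 1 (2 ^ j)) (4 ^ 2 ^ j) := by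
  induction j with
  | zero =>
    have h4X : (4 : MvPolynomial (Fin 2) ℤ) * X 1 = monomial (Finsupp.single 1 1) 4 := by
      rw [X, ← map_ofNat C 4, C_mul_monomial, mul_one]
    rw [pow_zero, pow_one, RS, map_sub, h4X,
      homogeneousComponent_eq_self (isHomogeneous_monomial _ (Finsupp.degree_single _ _)),
      homogeneousComponent_of_mem (isHomogeneous_X_pow 0 2), if_neg (by norm_num), sub_zero]
  | succ j ih =>
    obtain ⟨hR, hS⟩ := le_degree_of_mem_support_RS j
    rw [pow_succ', RS, homogeneousComponent_recursion 0 1 hR hS, ih, monomial_pow, ← pow_mul,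
      Finsupp.smul_single, smul_eq_mul, mul_comm]

theorem minimal_degree_monomial_Rpoly_general (k : ℕ) :
    (∀ m ∈ (Rpoly k).support, 2 ^ (k - 1) ≤ m 0 + m 1) ∧
    ∃ m ∈ (Rpoly k).support, m 0 + m 1 = 2 ^ (k - 1) ∧ m 0 = 0 ∧
      ∀ m' ∈ (Rpoly k).support, m' 0 + m' 1 = 2 ^ (k - 1) → m' = m := by
  have hdeg (m : Fin 2 →₀ ℕ) : m.degree = m 0 + m 1 := by
    rw [Finsupp.degree_eq_sum, Fin.sum_univ_two]
  have hlow (m : Fin 2 →₀ ℕ) := mem_support_and_degree_eq_iff_of_homogeneousComponent_eq_monomial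
    (m := m) (homogeneousComponent_RS_fst (k - 1)) (by positivity)
  obtain ⟨hmem, hdeg_single⟩ := (hlow (Finsupp.single 1 (2 ^ (k - 1)))).2 rfl
  simp only [Rpoly, ← hdeg]
  exact ⟨(le_degree_of_mem_support_RS (k - 1)).1, _, hmem, hdeg_single, by simp,
    fun m' hm' hdeg' => (hlow m').1 ⟨hm', hdeg'⟩⟩

theorem minimal_degree_monomial_Rpoly (k : ℕ) (hk : 1 ≤ k) :
    (∀ m ∈ (Rpoly k).support, 2 ^ (k - 1) ≤ m 0 + m 1) ∧
    ∃ m ∈ (Rpoly k).support, m 0 + m 1 = 2 ^ (k - 1) ∧ m 0 = 0 ∧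
      ∀ m' ∈ (Rpoly k).support, m' 0 + m' 1 = 2 ^ (k - 1) → m' = m :=
  minimal_degree_monomial_Rpoly_general k
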